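/- arXiv:0902.1394 — 5 statements merged into one kernel-verified Lean document; each statement's English description precedes it below -/
import Mathlib

section
/- Fix integers k ≥ U ≥ 1 and t ≥ 0. For every serialized single-chunk dissemination schedule (V, par, rank, rec), the number of peers that complete reception of the chunk within t time units satisfies |{v ∈ V : rec v ≤ t}| ≤ ∑_{j=1}^{U} S_k(t−j+1). -/
/-- Value of the k-step Fibonacci sequence at natural indices. -/
def FkNat (k : ℕ) : ℕ → ℕ
  | 0 => 0
  | 1 => 1
  | n + 2 => ∑ j ∈ Finset.range k, FkNat k (n + 1 - j)
decreasing_by omega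

/-- The k-step Fibonacci sequence `F_k : ℤ → ℕ`:
`F_k i = 0` for `i ≤ 0`, `F_k 1 = 1`, and `F_k i = ∑_{j=1}^{k} F_k (i - j)` for `i > 1`. -/
def Fk (k : ℕ) (i : ℤ) : ℕ := if i ≤ 0 then 0 else FkNat k i.toNat

/-- The k-step Fibonacci sum `S_k n = ∑_{i=1}^{n} F_k i` (zero for `n ≤ 0`). -/
noncomputable def Sk (k : ℕ) (n : ℤ) : ℕ := ∑ i ∈ Finset.Icc (1 : ℤ) n, Fk k i

/-!
Every peer is determined by its sender and its rank. Hence the peers served by time `s` inject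
into the transmission slots available before `s`: the source slots `j ≤ min U s`, and, for each
peer `p`, the slots `r ≤ k` with `rec p + r ≤ s`. Counting the latter by `r` gives
`N s ≤ #{j ≤ min U s} + ∑_{r=1}^{k} N (s - r)` for the number `N s` of peers served by time `s`,
while the bound `∑_{j=1}^{U} S_k (s - j + 1)` satisfies the same recurrence with equality, because
`S_k n = [1 ≤ n] + ∑_{r=1}^{k} S_k (n - r)`. Induction on `s` compares the two.
-/

open Finset

theorem Fk_eq_FkNat_toNat (k : ℕ) (i : ℤ) : Fk k i = FkNat k i.toNat := by
  unfold Fk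
  split_ifs with h
  · rw [Int.toNat_of_nonpos h, FkNat]
  · rfl

theorem Fk_of_nonpos (k : ℕ) {i : ℤ} (h : i ≤ 0) : Fk k i = 0 := if_pos h

theorem Fk_eq_sum_Icc (k : ℕ) {i : ℤ} (hi : 2 ≤ i) :
    Fk k i = ∑ r ∈ Icc 1 k, Fk k (i - r) := by
  obtain ⟨n, rfl⟩ : ∃ n : ℕ, i = n + 2 := ⟨(i - 2).toNat, by omega⟩
  simp only [Fk_eq_FkNat_toNat]
  rw [show ((n : ℤ) + 2).toNat = n + 2 by omega, FkNat, ← Ico_add_one_right_eq_Icc,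
    sum_Ico_eq_sum_range, Nat.add_sub_cancel]
  refine sum_congr rfl fun j _ => ?_
  congr 1
  omega

theorem Fk_eq_ite_add_sum (k : ℕ) (i : ℤ) :
    Fk k i = (if i = 1 then 1 else 0) + ∑ r ∈ Icc 1 k, Fk k (i - r) := by
  rcases lt_trichotomy i 1 with hi | rfl | hi
  · rw [Fk_of_nonpos k (by omega), if_neg hi.ne,
      sum_eq_zero fun r hr => Fk_of_nonpos k (by simp only [mem_Icc] at hr; omega), add_zero]
  · rw [sum_eq_zero fun r hr => Fk_of_nonpos k (by simp only [mem_Icc] at hr; omega)]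
    simp [Fk_eq_FkNat_toNat, FkNat]
  · rw [if_neg hi.ne', zero_add, Fk_eq_sum_Icc k hi]

theorem sum_Icc_Fk_of_le_one (k : ℕ) {a : ℤ} (ha : a ≤ 1) (n : ℤ) :
    ∑ i ∈ Icc a n, Fk k i = Sk k n :=
  (sum_subset (Icc_subset_Icc_left ha) fun i hi hi' =>
    Fk_of_nonpos k (by simp only [mem_Icc] at hi hi'; omega)).symm

theorem sum_Icc_Fk_sub (k r : ℕ) (n : ℤ) :
    ∑ i ∈ Icc 1 n, Fk k (i - r) = Sk k (n - r) := by
  rw [← sum_Icc_Fk_of_le_one k (a := 1 - r) (by omega),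
    show Icc 1 n = (Icc (1 - (r : ℤ)) (n - r)).map (addRightEmbedding (r : ℤ)) by simp, sum_map]
  simp

theorem Sk_eq_ite_add_sum (k : ℕ) (n : ℤ) :
    Sk k n = (if 1 ≤ n then 1 else 0) + ∑ r ∈ Icc 1 k, Sk k (n - r) := by
  rw [Sk, sum_congr rfl fun i _ => Fk_eq_ite_add_sum k i, sum_add_distrib, sum_ite_eq',
    sum_comm]
  simp only [sum_Icc_Fk_sub, mem_Icc, le_refl, true_and]

theorem le_of_le_sum_shift {k : ℕ} {c f g : ℤ → ℕ} (hf_neg : ∀ s < 0, f s = 0)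
    (hf : ∀ s, f s ≤ c s + ∑ r ∈ Icc 1 k, f (s - r))
    (hg : ∀ s, c s + ∑ r ∈ Icc 1 k, g (s - r) ≤ g s) (s : ℤ) : f s ≤ g s := by
  suffices ∀ n : ℕ, ∀ s : ℤ, s < n → f s ≤ g s from this (s.toNat + 1) s (by omega)
  intro n
  induction n with
  | zero => intro s hs; simp [hf_neg s hs]
  | succ n ih =>
    intro s hs
    calc f s ≤ c s + ∑ r ∈ Icc 1 k, f (s - r) := hf s
      _ ≤ c s + ∑ r ∈ Icc 1 k, g (s - r) := by
        gcongr with r hr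
        exact ih _ (by simp only [mem_Icc] at hr; omega)
      _ ≤ g s := hg s

noncomputable def diffusionBound (k U : ℕ) (s : ℤ) : ℕ := ∑ j ∈ Icc 1 U, Sk k (s - j + 1)

theorem diffusionBound_eq (k U : ℕ) (s : ℤ) :
    diffusionBound k U s =
      #{j ∈ Icc 1 U | ((j : ℕ) : ℤ) ≤ s} + ∑ r ∈ Icc 1 k, diffusionBound k U (s - r) := by
  rw [diffusionBound, sum_congr rfl fun j _ => Sk_eq_ite_add_sum k _, sum_add_distrib,
    card_filter, sum_comm]
  congr 1
  · exact sum_congr rfl fun j _ => if_congr (by omega) rfl rfl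
  · exact sum_congr rfl fun r _ => sum_congr rfl fun j _ => congrArg _ (by ring)

section Schedule

variable {V : Type*}

structure IsSerialSchedule (k U : ℕ) (par : V → Option V) (rank rec : V → ℕ) : Prop where
  one_le_rank : ∀ v, 1 ≤ rank v
  rank_ne : ∀ v w, v ≠ w → par v = par w → rank v ≠ rank w
  rank_le_of_source : ∀ v, par v = none → rank v ≤ U
  rank_le_of_peer : ∀ v p, par v = some p → rank v ≤ k
  rank_le_rec : ∀ v, par v = none → rank v ≤ rec v
  rec_add_rank_le : ∀ v p, par v = some p → rec p + rank v ≤ rec v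

variable {k U : ℕ} {par : V → Option V} {rank rec : V → ℕ}

theorem IsSerialSchedule.rank_injOn (h : IsSerialSchedule k U par rank rec) (o : Option V) :
    Set.InjOn rank {v | par v = o} :=
  fun v hv w hw hvw => by_contra fun hne => h.rank_ne v w hne (hv.trans hw.symm) hvw

variable [Fintype V]

def numReceivedBy (rec : V → ℕ) (s : ℤ) : ℕ := #{v | (rec v : ℤ) ≤ s}

theorem numReceivedBy_of_neg (rec : V → ℕ) {s : ℤ} (hs : s < 0) : numReceivedBy rec s = 0 :=
  card_eq_zero.2 <| filter_eq_empty_iff.2 fun v _ => by omega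

namespace IsSerialSchedule

theorem card_source_children_le (h : IsSerialSchedule k U par rank rec) (s : ℤ) :
    #{v | par v = none ∧ (rec v : ℤ) ≤ s} ≤ #{j ∈ Icc 1 U | ((j : ℕ) : ℤ) ≤ s} := by
  refine card_le_card_of_injOn rank (fun v hv => ?_)
    ((h.rank_injOn none).mono fun v hv => (mem_filter.1 hv).2.1)
  simp only [coe_filter, mem_univ, true_and, Set.mem_ofPred_eq, mem_Icc] at hv ⊢
  have := h.rank_le_rec v hv.1
  exact ⟨⟨h.one_le_rank v, h.rank_le_of_source v hv.1⟩, by omega⟩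

variable [DecidableEq V]

theorem card_peer_children_le (h : IsSerialSchedule k U par rank rec) (p : V) (s : ℤ) :
    #{v | par v = some p ∧ (rec v : ℤ) ≤ s} ≤ #{r ∈ Icc 1 k | ((rec p + r : ℕ) : ℤ) ≤ s} := by
  refine card_le_card_of_injOn rank (fun v hv => ?_)
    ((h.rank_injOn (some p)).mono fun v hv => (mem_filter.1 hv).2.1)
  simp only [coe_filter, mem_univ, true_and, Set.mem_ofPred_eq, mem_Icc] at hv ⊢
  have := h.rec_add_rank_le v p hv.1
  exact ⟨⟨h.one_le_rank v, h.rank_le_of_peer v p hv.1⟩, by omega⟩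

theorem numReceivedBy_le (h : IsSerialSchedule k U par rank rec) (s : ℤ) :
    numReceivedBy rec s ≤
      #{j ∈ Icc 1 U | ((j : ℕ) : ℤ) ≤ s} + ∑ r ∈ Icc 1 k, numReceivedBy rec (s - r) := by
  calc numReceivedBy rec s
      = #{v | par v = none ∧ (rec v : ℤ) ≤ s} +
          ∑ p, #{v | par v = some p ∧ (rec v : ℤ) ≤ s} := by
        rw [numReceivedBy, card_eq_sum_card_fiberwise (f := par) (t := univ) (by simp),
          Fintype.sum_option]
        simp only [filter_filter, and_comm]
    _ ≤ #{j ∈ Icc 1 U | ((j : ℕ) : ℤ) ≤ s} + ∑ p, #{r ∈ Icc 1 k | ((rec p + r : ℕ) : ℤ) ≤ s} :=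
        add_le_add (h.card_source_children_le s)
          (sum_le_sum fun p _ => h.card_peer_children_le p s)
    _ = #{j ∈ Icc 1 U | ((j : ℕ) : ℤ) ≤ s} + ∑ r ∈ Icc 1 k, numReceivedBy rec (s - r) := by
        simp only [numReceivedBy, card_filter]
        rw [sum_comm]
        congr 1
        exact sum_congr rfl fun r _ => sum_congr rfl fun p _ => if_congr (by omega) rfl rfl

end IsSerialSchedule

end Schedule

theorem stream_diffusion_upper_bound_general
    (k U : ℕ) (t : ℕ)
    (V : Type) [Fintype V] [DecidableEq V]
    (par : V → Option V) (rank rec : V → ℕ)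
    (hrank_pos : ∀ v, 1 ≤ rank v)
    (hrank_inj : ∀ v w, v ≠ w → par v = par w → rank v ≠ rank w)
    (hrank_src : ∀ v, par v = none → rank v ≤ U)
    (hrank_peer : ∀ v p, par v = some p → rank v ≤ k)
    (hrec_src : ∀ v, par v = none → rank v ≤ rec v)
    (hrec_peer : ∀ v p, par v = some p → rec p + rank v ≤ rec v) :
    (Finset.univ.filter fun v => rec v ≤ t).card ≤
      ∑ j ∈ Finset.Icc 1 U, Sk k ((t : ℤ) - (j : ℤ) + 1) := by
  have hsched : IsSerialSchedule k U par rank rec :=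
    ⟨hrank_pos, hrank_inj, hrank_src, hrank_peer, hrec_src, hrec_peer⟩
  calc #{v | rec v ≤ t} = numReceivedBy rec t := by simp only [numReceivedBy, Nat.cast_le]
    _ ≤ diffusionBound k U t :=
      le_of_le_sum_shift (fun _ => numReceivedBy_of_neg rec) hsched.numReceivedBy_le
        (fun s => (diffusionBound_eq k U s).ge) t

/-- Upper bound on the stream diffusion metric: in any serialized single-chunk
dissemination schedule with normalized upload capacity `U` and at most `k` neighbors,
the number of peers that complete reception of the chunk within `t` time units is at
most `∑_{j=1}^{U} S_k (t - j + 1)`. -/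
theorem stream_diffusion_upper_bound
    (k U : ℕ) (hU : 1 ≤ U) (hUk : U ≤ k) (t : ℕ)
    (V : Type) [Fintype V] [DecidableEq V]
    (par : V → Option V) (rank rec : V → ℕ)
    (hrank_pos : ∀ v, 1 ≤ rank v)
    (hrank_inj : ∀ v w, v ≠ w → par v = par w → rank v ≠ rank w)
    (hrank_src : ∀ v, par v = none → rank v ≤ U)
    (hrank_peer : ∀ v p, par v = some p → rank v ≤ k)
    (hrec_src : ∀ v, par v = none → rank v ≤ rec v)
    (hrec_peer : ∀ v p, par v = some p → rec p + rank v ≤ rec v) :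
    (Finset.univ.filter fun v => rec v ≤ t).card ≤
      ∑ j ∈ Finset.Icc 1 U, Sk k ((t : ℤ) - (j : ℤ) + 1) :=
  stream_diffusion_upper_bound_general k U t V par rank rec hrank_pos hrank_inj hrank_src hrank_peer
    hrec_src hrec_peer
end

section
/- Fix integers k ≥ U ≥ 1 and t ≥ 0. There exists a serialized single-chunk dissemination schedule (V, par, rank, rec) such that |{v ∈ V : rec v ≤ t}| = ∑_{j=1}^{U} S_k(t−j+1); that is, the upper bound ∑_{j=1}^{U} S_k(t−j+1) on the stream diffusion metric is attained. -/
/-! The bound is attained by the greedy schedule in which every sender transmits to as many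
peers as it may: the source serves peers of ranks `1, …, U`, and every other peer serves peers
of ranks `1, …, k`. A peer is determined by its source rank `j` and the sequence of ranks
`r₁, …, rₙ ∈ [1, k]` along its path from the source, and it completes reception at time
`j + r₁ + ⋯ + rₙ`. The rank sequences with sum exactly `m` are the compositions of `m` into parts
at most `k`, counted by `F_k (m + 1)`; summing over `m ≤ t - j` gives `S_k (t - j + 1)` peers of
source rank `j` served by time `t`. -/

open Finset

def boundedCompositions (k : ℕ) : ℕ → Finset (List ℕ)
  | 0 => {[]}
  | m + 1 => ((range k).filter (· ≤ m)).biUnion fun i =>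
      (boundedCompositions k (m - i)).image (List.cons (i + 1))

theorem mem_boundedCompositions {k m : ℕ} {l : List ℕ} :
    l ∈ boundedCompositions k m ↔ (∀ x ∈ l, 1 ≤ x ∧ x ≤ k) ∧ l.sum = m := by
  induction m using Nat.strong_induction_on generalizing l with
  | _ m ih =>
    rcases m with _ | m
    · cases l with
      | nil => simp [boundedCompositions]
      | cons r l => simp [boundedCompositions]; omega
    · cases l with
      | nil => simp [boundedCompositions]
      | cons r l =>
        simp only [boundedCompositions, mem_biUnion, mem_filter, mem_range, mem_image,
          List.cons.injEq, List.forall_mem_cons, List.sum_cons]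
        constructor
        · rintro ⟨i, ⟨hik, him⟩, l', hl', rfl, rfl⟩
          obtain ⟨hparts, hsum⟩ := (ih (m - i) (by omega)).1 hl'
          exact ⟨⟨⟨by omega, by omega⟩, hparts⟩, by omega⟩
        · rintro ⟨⟨⟨hr1, hrk⟩, hparts⟩, hsum⟩
          exact ⟨r - 1, ⟨by omega, by omega⟩, l, (ih _ (by omega)).2 ⟨hparts, by omega⟩,
            by omega, rfl⟩

theorem card_boundedCompositions (k m : ℕ) :
    #(boundedCompositions k m) = FkNat k (m + 1) := by
  induction m using Nat.strong_induction_on with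
  | _ m ih =>
    rcases m with _ | m
    · simp [boundedCompositions, FkNat]
    · rw [boundedCompositions, card_biUnion, sum_filter, FkNat]
      · refine sum_congr rfl fun i _ => ?_
        split_ifs with him
        · rw [card_image_of_injective _ (List.cons_injective), ih _ (by omega)]
          congr 1
          omega
        · rw [show m + 1 - i = 0 by omega, FkNat]
      · intro i _ i' _ hii'
        simp only [Function.onFun, disjoint_left, mem_image]
        rintro _ ⟨l, -, rfl⟩ ⟨l', -, hl'⟩
        exact hii' (by simpa using (List.cons_eq_cons.mp hl').1.symm)

def compositionsUpTo (k n : ℕ) : Finset (List ℕ) :=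
  (range n).biUnion (boundedCompositions k)

theorem mem_compositionsUpTo {k n : ℕ} {l : List ℕ} :
    l ∈ compositionsUpTo k n ↔ (∀ x ∈ l, 1 ≤ x ∧ x ≤ k) ∧ l.sum < n := by
  simp only [compositionsUpTo, mem_biUnion, mem_range, mem_boundedCompositions]
  exact ⟨fun ⟨_, hm, hparts, hsum⟩ => ⟨hparts, hsum ▸ hm⟩,
    fun ⟨hparts, hsum⟩ => ⟨_, hsum, hparts, rfl⟩⟩

theorem card_compositionsUpTo (k n : ℕ) :
    #(compositionsUpTo k n) = ∑ m ∈ range n, FkNat k (m + 1) := by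
  rw [compositionsUpTo, card_biUnion]
  · exact sum_congr rfl fun m _ => card_boundedCompositions k m
  · intro m _ m' _ hmm'
    simp only [Function.onFun, disjoint_left, mem_boundedCompositions]
    exact fun _ hl hl' => hmm' (hl.2.symm.trans hl'.2)

theorem Sk_eq_sum_range (k : ℕ) (n : ℤ) : Sk k n = ∑ m ∈ range n.toNat, FkNat k (m + 1) := by
  have Fk_eq (i : ℤ) (hi : i ∈ Icc 1 n) : Fk k i = FkNat k (i.toNat - 1 + 1) := by
    rw [mem_Icc] at hi
    rw [Fk, if_neg (by omega)]
    congr 1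
    omega
  refine sum_nbij' (fun i => i.toNat - 1) (fun m => (m : ℤ) + 1) ?_ ?_ ?_ ?_ Fk_eq
  all_goals intro x hx; simp only [mem_Icc, mem_range] at hx ⊢; omega

/-- Peers served by time `t`, each given by its source rank `j` and its rank sequence from the
source, most recent rank first. -/
def peers (k U t : ℕ) : Finset (ℕ × List ℕ) :=
  (Icc 1 U).biUnion fun j => (compositionsUpTo k (t + 1 - j)).image (Prod.mk j)

theorem mem_peers {k U t j : ℕ} {l : List ℕ} :
    (j, l) ∈ peers k U t ↔ (1 ≤ j ∧ j ≤ U) ∧ (∀ x ∈ l, 1 ≤ x ∧ x ≤ k) ∧ j + l.sum ≤ t := by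
  simp only [peers, mem_biUnion, mem_Icc, mem_image, Prod.mk.injEq, mem_compositionsUpTo]
  constructor
  · rintro ⟨j, hj, l, ⟨hparts, hsum⟩, rfl, rfl⟩
    exact ⟨hj, hparts, by omega⟩
  · rintro ⟨hj, hparts, hsum⟩
    exact ⟨j, hj, l, ⟨hparts, by omega⟩, rfl, rfl⟩

theorem card_peers (k U t : ℕ) :
    #(peers k U t) = ∑ j ∈ Icc 1 U, Sk k ((t : ℤ) - (j : ℤ) + 1) := by
  rw [peers, card_biUnion]
  · refine sum_congr rfl fun j _ => ?_
    rw [card_image_of_injective _ (Prod.mk_right_injective j), card_compositionsUpTo,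
      Sk_eq_sum_range]
    congr 2
    omega
  · intro j _ j' _ hjj'
    simp only [Function.onFun, disjoint_left, mem_image]
    rintro _ ⟨l, -, rfl⟩ ⟨l', -, hl'⟩
    exact hjj' (congrArg Prod.fst hl').symm

theorem mem_peers_of_cons_mem_peers {k U t j r : ℕ} {l : List ℕ}
    (h : (j, r :: l) ∈ peers k U t) : (j, l) ∈ peers k U t := by
  rw [mem_peers, List.forall_mem_cons, List.sum_cons] at h
  rw [mem_peers]
  exact ⟨h.1, h.2.1.2, by omega⟩

section Schedule

variable {k U t : ℕ}

def peerSender : peers k U t → Option (peers k U t)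
  | ⟨(_, []), _⟩ => none
  | ⟨(j, _ :: l), h⟩ => some ⟨(j, l), mem_peers_of_cons_mem_peers h⟩

def peerRank : peers k U t → ℕ
  | ⟨(j, []), _⟩ => j
  | ⟨(_, r :: _), _⟩ => r

def peerReceptionTime (v : peers k U t) : ℕ := v.1.1 + v.1.2.sum

theorem peerSender_peerRank_injective :
    Function.Injective fun v : peers k U t => (peerSender v, peerRank v) := by
  rintro ⟨⟨j, _ | ⟨r, l⟩⟩, hv⟩ ⟨⟨j', _ | ⟨r', l'⟩⟩, hw⟩ h <;>
    simp_all [peerSender, peerRank]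

theorem one_le_peerRank (v : peers k U t) : 1 ≤ peerRank v := by
  obtain ⟨⟨j, l⟩, hv⟩ := v
  obtain ⟨⟨hj, -⟩, hparts, -⟩ := mem_peers.1 hv
  cases l with
  | nil => exact hj
  | cons r l => exact (hparts r List.mem_cons_self).1

theorem peerRank_le_of_peerSender_eq_none {v : peers k U t}
    (hroot : peerSender v = none) : peerRank v ≤ U := by
  obtain ⟨⟨j, l⟩, hv⟩ := v
  cases l with
  | nil => exact (mem_peers.1 hv).1.2
  | cons r l => simp [peerSender] at hroot

theorem peerRank_le_of_peerSender_eq_some {v p : peers k U t}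
    (hsender : peerSender v = some p) : peerRank v ≤ k := by
  obtain ⟨⟨j, l⟩, hv⟩ := v
  cases l with
  | nil => simp [peerSender] at hsender
  | cons r l => exact ((mem_peers.1 hv).2.1 r List.mem_cons_self).2

theorem peerRank_eq_of_peerSender_eq_none {v : peers k U t}
    (hroot : peerSender v = none) : peerRank v = peerReceptionTime v := by
  obtain ⟨⟨j, l⟩, hv⟩ := v
  cases l with
  | nil => simp [peerRank, peerReceptionTime]
  | cons r l => simp [peerSender] at hroot

theorem peerReceptionTime_add_peerRank_of_peerSender_eq_some {v p : peers k U t}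
    (hsender : peerSender v = some p) :
    peerReceptionTime p + peerRank v = peerReceptionTime v := by
  obtain ⟨⟨j, l⟩, hv⟩ := v
  cases l with
  | nil => simp [peerSender] at hsender
  | cons r l =>
    obtain rfl := (Option.some.inj hsender).symm
    simp only [peerReceptionTime, peerRank, List.sum_cons]
    omega

theorem peerReceptionTime_le (v : peers k U t) : peerReceptionTime v ≤ t :=
  (mem_peers.1 v.2).2.2

end Schedule

theorem stream_diffusion_bound_attained_general
    (k U : ℕ) (t : ℕ) :
    ∃ (V : Type) (_ : Fintype V) (_ : DecidableEq V)
      (par : V → Option V) (rank rec : V → ℕ),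
      (∀ v, 1 ≤ rank v) ∧
      (∀ v w, v ≠ w → par v = par w → rank v ≠ rank w) ∧
      (∀ v, par v = none → rank v ≤ U) ∧
      (∀ v p, par v = some p → rank v ≤ k) ∧
      (∀ v, par v = none → rank v ≤ rec v) ∧
      (∀ v p, par v = some p → rec p + rank v ≤ rec v) ∧
      (Finset.univ.filter fun v => rec v ≤ t).card =
        ∑ j ∈ Finset.Icc 1 U, Sk k ((t : ℤ) - (j : ℤ) + 1) :=
  ⟨peers k U t, inferInstance, inferInstance, peerSender, peerRank, peerReceptionTime,
    one_le_peerRank,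
    fun _ _ hvw hsender hrank =>
      hvw (peerSender_peerRank_injective (Prod.ext hsender hrank)),
    fun _ => peerRank_le_of_peerSender_eq_none,
    fun _ _ => peerRank_le_of_peerSender_eq_some,
    fun _ hroot => (peerRank_eq_of_peerSender_eq_none hroot).le,
    fun _ _ hsender => (peerReceptionTime_add_peerRank_of_peerSender_eq_some hsender).le,
    by rw [filter_true_of_mem fun v _ => peerReceptionTime_le v, card_univ, Fintype.card_coe,
      card_peers]⟩

/-- The upper bound `∑_{j=1}^{U} S_k (t - j + 1)` on the stream diffusion metric is
attained: there exists a serialized single-chunk dissemination schedule in which exactly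
that many peers complete reception of the chunk within `t` time units. -/
theorem stream_diffusion_bound_attained
    (k U : ℕ) (hU : 1 ≤ U) (hUk : U ≤ k) (t : ℕ) :
    ∃ (V : Type) (_ : Fintype V) (_ : DecidableEq V)
      (par : V → Option V) (rank rec : V → ℕ),
      (∀ v, 1 ≤ rank v) ∧
      (∀ v w, v ≠ w → par v = par w → rank v ≠ rank w) ∧
      (∀ v, par v = none → rank v ≤ U) ∧
      (∀ v p, par v = some p → rank v ≤ k) ∧
      (∀ v, par v = none → rank v ≤ rec v) ∧
      (∀ v p, par v = some p → rec p + rank v ≤ rec v) ∧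
      (Finset.univ.filter fun v => rec v ≤ t).card =
        ∑ j ∈ Finset.Icc 1 U, Sk k ((t : ℤ) - (j : ℤ) + 1) :=
  stream_diffusion_bound_attained_general k U t
end

section
/- Fix integers U ≥ 1 and t ≥ U. For every unconstrained serialized single-chunk dissemination schedule (V, par, rank, rec) (i.e., with no upper limit k on the ranks of peers served by other peers), the number of peers completing reception within t time units satisfies |{v ∈ V : rec v ≤ t}| ≤ 2^t − 2^{t−U} = 2^t (1 − 2^{−U}). -/
/-!
Give a peer that completes reception at time `rec v ≤ t` the weight `2^(t - rec v)`. The children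
of a peer `p` have distinct ranks `r ≥ 1` and weights at most `2^(t - rec p - r)`, so together
they weigh at most `2^(t - rec p) - 1`: every peer outweighs its children by at least one.
Likewise the children of the source, with distinct ranks in `[1, U]`, weigh at most
`2^t - 2^(t - U)`. Summing over the peers, the total weight cancels and the number of peers is
bounded by the weight of the source's children.
-/

open Finset

theorem sum_Icc_two_pow_sub {d m : ℕ} (hm : m ≤ d) :
    ∑ r ∈ Icc 1 m, 2 ^ (d - r) = 2 ^ d - 2 ^ (d - m) := by
  induction m with
  | zero => simp
  | succ n ih =>
    rw [sum_Icc_succ_top (by omega), ih (by omega)]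
    have hdouble : 2 ^ (d - n) = 2 * 2 ^ (d - (n + 1)) := by
      rw [← pow_succ']
      congr 1
      omega
    have hle : 2 ^ (d - n) ≤ 2 ^ d := Nat.pow_le_pow_right (by norm_num) (by omega)
    omega

theorem sum_two_pow_sub_le_of_subset_Icc {s : Finset ℕ} {d m : ℕ}
    (hs : ∀ r ∈ s, 1 ≤ r ∧ r ≤ m ∧ r ≤ d) :
    ∑ r ∈ s, 2 ^ (d - r) ≤ 2 ^ d - 2 ^ (d - m) :=
  calc ∑ r ∈ s, 2 ^ (d - r)
      ≤ ∑ r ∈ Icc 1 (min m d), 2 ^ (d - r) :=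
        sum_le_sum_of_subset fun r hr => by simpa using hs r hr
    _ = 2 ^ d - 2 ^ (d - m) := by
        rw [sum_Icc_two_pow_sub (min_le_right m d)]
        congr 2
        omega

section Ranks

variable {ι : Type*} {G : Finset ι} {rank e : ι → ℕ} {d : ℕ}

theorem sum_two_pow_le_of_injOn_rank {m : ℕ}
    (hinj : Set.InjOn rank G) (hpos : ∀ v ∈ G, 1 ≤ rank v) (hm : ∀ v ∈ G, rank v ≤ m)
    (he : ∀ v ∈ G, e v + rank v ≤ d) :
    ∑ v ∈ G, 2 ^ e v ≤ 2 ^ d - 2 ^ (d - m) :=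
  calc ∑ v ∈ G, 2 ^ e v
      ≤ ∑ v ∈ G, 2 ^ (d - rank v) :=
        sum_le_sum fun v hv => Nat.pow_le_pow_right (by norm_num) (by have := he v hv; omega)
    _ = ∑ r ∈ G.image rank, 2 ^ (d - r) := by rw [sum_image hinj]
    _ ≤ 2 ^ d - 2 ^ (d - m) := sum_two_pow_sub_le_of_subset_Icc fun r hr => by
        obtain ⟨v, hv, rfl⟩ := mem_image.mp hr
        exact ⟨hpos v hv, hm v hv, by have := he v hv; omega⟩

theorem sum_two_pow_add_one_le_of_injOn_rank
    (hinj : Set.InjOn rank G) (hpos : ∀ v ∈ G, 1 ≤ rank v)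
    (he : ∀ v ∈ G, e v + rank v ≤ d) :
    ∑ v ∈ G, 2 ^ e v + 1 ≤ 2 ^ d := by
  have hsum := sum_two_pow_le_of_injOn_rank (m := d) hinj hpos
    (fun v hv => by have := he v hv; omega) he
  rw [Nat.sub_self, pow_zero] at hsum
  have := Nat.one_le_two_pow (n := d)
  omega

end Ranks

section Forest

variable {V : Type*} [DecidableEq V] (F : Finset V) (par : V → Option V)

theorem sum_eq_sum_roots_add_sum_children (w : V → ℕ)
    (hclosed : ∀ v ∈ F, ∀ p, par v = some p → p ∈ F) :
    ∑ v ∈ F, w v =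
      ∑ v ∈ F with par v = none, w v + ∑ p ∈ F, ∑ v ∈ F with par v = some p, w v := by
  have hmaps : ∀ v ∈ F, par v ∈ insert none (F.map .some) := by
    intro v hv
    cases hpv : par v with
    | none => simp
    | some p => simpa using hclosed v hv p hpv
  rw [← sum_fiberwise_of_maps_to hmaps, sum_insert (by simp), sum_map]
  rfl

theorem card_le_of_weight_exceeds_children (w : V → ℕ) (B : ℕ)
    (hclosed : ∀ v ∈ F, ∀ p, par v = some p → p ∈ F)
    (hroots : ∑ v ∈ F with par v = none, w v ≤ B)
    (hchildren : ∀ p ∈ F, ∑ v ∈ F with par v = some p, w v + 1 ≤ w p) :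
    #F ≤ B := by
  have hsum : ∑ p ∈ F, (∑ v ∈ F with par v = some p, w v + 1) ≤ ∑ p ∈ F, w p :=
    sum_le_sum hchildren
  rw [sum_add_distrib, sum_const, smul_eq_mul, mul_one,
    sum_eq_sum_roots_add_sum_children F par w hclosed] at hsum
  omega

end Forest

theorem stream_diffusion_upper_bound_unconstrained_general
    (U : ℕ) (t : ℕ)
    (V : Type) [Fintype V] [DecidableEq V]
    (par : V → Option V) (rank rec : V → ℕ)
    (hrank_pos : ∀ v, 1 ≤ rank v)
    (hrank_inj : ∀ v w, v ≠ w → par v = par w → rank v ≠ rank w)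
    (hrank_src : ∀ v, par v = none → rank v ≤ U)
    (hrec_src : ∀ v, par v = none → rank v ≤ rec v)
    (hrec_peer : ∀ v p, par v = some p → rec p + rank v ≤ rec v) :
    (Finset.univ.filter fun v => rec v ≤ t).card ≤ 2 ^ t - 2 ^ (t - U) := by
  set F := Finset.univ.filter fun v => rec v ≤ t
  have hmem : ∀ v, v ∈ F ↔ rec v ≤ t := by simp [F]
  have hinj : ∀ o, Set.InjOn rank ↑{v ∈ F | par v = o} := by
    intro o v hv w hw hvw
    by_contra hne
    exact hrank_inj v w hne ((mem_filter.mp hv).2.trans (mem_filter.mp hw).2.symm) hvw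
  refine card_le_of_weight_exceeds_children F par (fun v => 2 ^ (t - rec v)) _ ?closed ?roots
    ?children
  case closed =>
    intro v hv p hp
    have := hrec_peer v p hp
    have := (hmem v).mp hv
    exact (hmem p).mpr (by omega)
  case roots =>
    refine sum_two_pow_le_of_injOn_rank (hinj none) (fun v _ => hrank_pos v)
      (fun v hv => hrank_src v (mem_filter.mp hv).2) fun v hv => ?_
    obtain ⟨hvF, hroot⟩ := mem_filter.mp hv
    have := hrec_src v hroot
    have := (hmem v).mp hvF
    omega
  case children =>
    intro p _
    refine sum_two_pow_add_one_le_of_injOn_rank (hinj (some p)) (fun v _ => hrank_pos v)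
      fun v hv => ?_
    obtain ⟨hvF, hparent⟩ := mem_filter.mp hv
    have := hrec_peer v p hparent
    have := (hmem v).mp hvF
    omega

/-- Upper bound on the stream diffusion metric with no limit on the number of neighbors
(`k → ∞`): in any unconstrained serialized single-chunk dissemination schedule with
normalized upload capacity `U`, the number of peers completing reception within
`t ≥ U` time units is at most `2^t - 2^(t-U) = 2^t (1 - 2^{-U})`. -/
theorem stream_diffusion_upper_bound_unconstrained
    (U : ℕ) (hU : 1 ≤ U) (t : ℕ) (ht : U ≤ t)
    (V : Type) [Fintype V] [DecidableEq V]
    (par : V → Option V) (rank rec : V → ℕ)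
    (hrank_pos : ∀ v, 1 ≤ rank v)
    (hrank_inj : ∀ v w, v ≠ w → par v = par w → rank v ≠ rank w)
    (hrank_src : ∀ v, par v = none → rank v ≤ U)
    (hrec_src : ∀ v, par v = none → rank v ≤ rec v)
    (hrec_peer : ∀ v p, par v = some p → rec p + rank v ≤ rec v) :
    (Finset.univ.filter fun v => rec v ≤ t).card ≤ 2 ^ t - 2 ^ (t - U) :=
  stream_diffusion_upper_bound_unconstrained_general U t V par rank rec hrank_pos hrank_inj
    hrank_src hrec_src hrec_peer
end

section
/- Let s ∈ ℝ and let i ≥ 1 be an integer. Suppose measurable rate functions r_1, …, r_i : ℝ → ℝ satisfy r_j(τ) ≥ 0 for all τ, r_j(τ) = 0 for τ < s, and ∑_{j=1}^{i} r_j(τ) ≤ 1 for all τ, and there are finish times f_1, …, f_i ≥ s with ∫_{s}^{f_j} r_j(τ) dτ = 1 for each j. If max_{1 ≤ j ≤ i} f_j = s + i (i.e., the transmissions achieve the minimum possible completion time), then ∑_{j=1}^{i} r_j(τ) = 1 for almost every τ ∈ [s, s+i]; in particular the node's upload capacity is fully utilized throughout the interval, as happens when the i chunk transmissions are serialized. 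-/
open MeasureTheory intervalIntegral

/-! Each transmission delivers one unit of data inside `[s, s + i]`, so the total rate integrates
to at least `i` over this interval of length `i`; since the total rate never exceeds the capacity
`1`, it must equal `1` almost everywhere. -/

theorem ae_eq_const_of_ae_le_of_le_integral {α : Type*} [MeasurableSpace α] {μ : Measure α}
    [IsFiniteMeasure μ] {g : α → ℝ} {c : ℝ} (hg : Integrable g μ) (hle : ∀ᵐ x ∂μ, g x ≤ c)
    (hint : c * μ.real Set.univ ≤ ∫ x, g x ∂μ) : g =ᵐ[μ] fun _ ↦ c := by
  refine (integral_eq_iff_of_ae_le hg (integrable_const c) hle).1 (le_antisymm ?_ ?_)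
  · exact integral_mono_ae hg (integrable_const c) hle
  · simpa [mul_comm] using hint

theorem intervalIntegral_le_setIntegral_Icc_of_nonneg {μ : Measure ℝ} {g : ℝ → ℝ}
    {s f t : ℝ} (hg : ∀ x, 0 ≤ g x) (hint : IntegrableOn g (Set.Icc s t) μ)
    (hsf : s ≤ f) (hft : f ≤ t) : ∫ x in s..f, g x ∂μ ≤ ∫ x in Set.Icc s t, g x ∂μ := by
  rw [intervalIntegral.integral_of_le hsf]
  exact setIntegral_mono_set hint (.of_forall hg)
    (.of_forall fun x hx ↦ ⟨hx.1.le, hx.2.trans hft⟩)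

theorem integrableOn_Icc_of_nonneg_of_le_one {g : ℝ → ℝ} (hmeas : Measurable g)
    (hnonneg : ∀ x, 0 ≤ g x) (hle : ∀ x, g x ≤ 1) (a b : ℝ) :
    IntegrableOn g (Set.Icc a b) :=
  (integrable_const (1 : ℝ)).mono' hmeas.aestronglyMeasurable.restrict
    (.of_forall fun x ↦ by simpa [abs_of_nonneg (hnonneg x)] using hle x)

theorem serialized_transmissions_full_utilization_general
    (s : ℝ) (i : ℕ) (hi : 1 ≤ i)
    (r : Fin i → ℝ → ℝ) (f : Fin i → ℝ)
    (hmeas : ∀ j, Measurable (r j))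
    (hnonneg : ∀ j τ, 0 ≤ r j τ)
    (hcap : ∀ τ, ∑ j, r j τ ≤ 1)
    (hfs : ∀ j, s ≤ f j)
    (hfull : ∀ j, ∫ τ in s..(f j), r j τ = 1)
    (hmax : Finset.univ.sup' ⟨⟨0, hi⟩, Finset.mem_univ _⟩ f = s + (i : ℝ)) :
    ∀ᵐ τ ∂(volume.restrict (Set.Icc s (s + (i : ℝ)))), ∑ j, r j τ = 1 := by
  have hfle : ∀ j, f j ≤ s + i := fun j ↦ hmax ▸ Finset.le_sup' f (Finset.mem_univ j)
  have hint : ∀ j, IntegrableOn (r j) (Set.Icc s (s + i)) := fun j ↦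
    integrableOn_Icc_of_nonneg_of_le_one (hmeas j) (hnonneg j)
      (fun τ ↦ (Finset.single_le_sum (fun k _ ↦ hnonneg k τ) (Finset.mem_univ j)).trans (hcap τ))
      _ _
  have hdelivered : (i : ℝ) ≤ ∫ τ in Set.Icc s (s + i), ∑ j, r j τ := by
    rw [integral_finsetSum _ fun j _ ↦ hint j]
    calc (i : ℝ) = ∑ j, ∫ τ in s..(f j), r j τ := by simp [hfull]
      _ ≤ ∑ j, ∫ τ in Set.Icc s (s + i), r j τ := Finset.sum_le_sum fun j _ ↦
          intervalIntegral_le_setIntegral_Icc_of_nonneg (hnonneg j) (hint j) (hfs j) (hfle j)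
  refine ae_eq_const_of_ae_le_of_le_integral (integrable_finsetSum _ fun j _ ↦ hint j)
    (.of_forall hcap) ?_
  simpa using hdelivered

/-- If `i ≥ 1` unit-size chunk transmissions, starting no earlier than time `s` and
sharing a normalized upload capacity of 1, all complete by the minimum possible time
`s + i` (i.e. `max_j f_j = s + i`), then the upload capacity is fully utilized
throughout `[s, s + i]`: `∑_j r_j(τ) = 1` for almost every `τ ∈ [s, s + i]`,
as happens when the transmissions are serialized. -/
theorem serialized_transmissions_full_utilization
    (s : ℝ) (i : ℕ) (hi : 1 ≤ i)
    (r : Fin i → ℝ → ℝ) (f : Fin i → ℝ)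
    (hmeas : ∀ j, Measurable (r j))
    (hnonneg : ∀ j τ, 0 ≤ r j τ)
    (hzero : ∀ j τ, τ < s → r j τ = 0)
    (hcap : ∀ τ, ∑ j, r j τ ≤ 1)
    (hfs : ∀ j, s ≤ f j)
    (hfull : ∀ j, ∫ τ in s..(f j), r j τ = 1)
    (hmax : Finset.univ.sup' ⟨⟨0, hi⟩, Finset.mem_univ _⟩ f = s + (i : ℝ)) :
    ∀ᵐ τ ∂(volume.restrict (Set.Icc s (s + (i : ℝ)))), ∑ j, r j τ = 1 :=
  serialized_transmissions_full_utilization_general s i hi r f hmeas hnonneg hcap hfs hfull hmax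
end

section
/- Fix an integer k ≥ 2 and let P_k(x) = x^k − x^{k−1} − x^{k−2} − ⋯ − x − 1 be the characteristic polynomial of the k-step Fibonacci sequence. Then P_k has exactly one real root φ_k with φ_k > 1, this root satisfies 1 < φ_k < 2, and every other complex root of P_k has modulus strictly less than 1; in particular φ_k is the only root of P_k of modulus greater than 1. -/
/-!
Multiplying by `x - 1` turns `P_k(x) = 0` into `x ^ (k + 1) + 1 = 2 x ^ k`. On the positive
reals `P_k(x) / x ^ k = 1 - ∑_{i=1}^k x⁻ⁱ` is strictly increasing, so `P_k` has at most one
positive root, and the intermediate value theorem puts one in `(1, 2)`. For a complex root `z`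
with `r = ‖z‖ ≥ 1`, the triangle inequality applied to `z ^ k = ∑_{j<k} z ^ j` and to
`2 z ^ k = z ^ (k + 1) + 1` gives `r ^ (k + 1) + 1 = 2 r ^ k`; equality in the second
triangle inequality then forces `z = r`.
-/

open Finset

def fibCharPoly {R : Type*} [CommRing R] (k : ℕ) (x : R) : R :=
  x ^ k - ∑ j ∈ range k, x ^ j

section CommRing

variable {R S : Type*} [CommRing R] [CommRing S]

theorem sub_one_mul_fibCharPoly (k : ℕ) (x : R) :
    (x - 1) * fibCharPoly k x = x ^ (k + 1) - 2 * x ^ k + 1 := by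
  unfold fibCharPoly
  linear_combination -(geom_sum_mul x k)

theorem fibCharPoly_one (k : ℕ) : fibCharPoly k (1 : R) = 1 - k := by
  simp [fibCharPoly]

theorem fibCharPoly_two (k : ℕ) : fibCharPoly k (2 : R) = 1 := by
  linear_combination sub_one_mul_fibCharPoly k (2 : R)

theorem map_fibCharPoly (f : R →+* S) (k : ℕ) (x : R) :
    f (fibCharPoly k x) = fibCharPoly k (f x) := by
  simp [fibCharPoly]

end CommRing

section Ordered

variable {K : Type*} [Field K] [LinearOrder K] [IsStrictOrderedRing K] {k : ℕ}

theorem pow_mul_fibCharPoly_lt (hk : k ≠ 0) {t x : K} (ht : 1 < t) (hx : 0 < x) :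
    t ^ k * fibCharPoly k x < fibCharPoly k (t * x) := by
  have hsum : ∑ j ∈ range k, (t * x) ^ j < ∑ j ∈ range k, t ^ k * x ^ j := by
    refine sum_lt_sum_of_nonempty (nonempty_range_iff.mpr hk) fun j hj => ?_
    rw [mul_pow]
    gcongr
    exact mem_range.mp hj
  simp only [fibCharPoly, mul_sub, mul_sum, mul_pow] at hsum ⊢
  linarith

theorem fibCharPoly_pos_of_lt (hk : k ≠ 0) {x y : K} (hx : 0 < x) (hxy : x < y)
    (h : 0 ≤ fibCharPoly k x) : 0 < fibCharPoly k y :=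
  calc 0 ≤ (y / x) ^ k * fibCharPoly k x := mul_nonneg (pow_nonneg (div_pos (hx.trans hxy) hx).le k) h
    _ < fibCharPoly k (y / x * x) := pow_mul_fibCharPoly_lt hk ((one_lt_div hx).mpr hxy) hx
    _ = fibCharPoly k y := by rw [div_mul_cancel₀ y hx.ne']

theorem eq_of_fibCharPoly_eq_zero (hk : k ≠ 0) {x y : K} (hx : 0 < x) (hy : 0 < y)
    (hPx : fibCharPoly k x = 0) (hPy : fibCharPoly k y = 0) : x = y := by
  rcases lt_trichotomy x y with h | h | h
  · exact absurd hPy (fibCharPoly_pos_of_lt hk hx h hPx.ge).ne'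
  · exact h
  · exact absurd hPx (fibCharPoly_pos_of_lt hk hy h hPy.ge).ne'

end Ordered

theorem exists_fibCharPoly_eq_zero {k : ℕ} (hk : 2 ≤ k) :
    ∃ φ ∈ Set.Ioo (1 : ℝ) 2, fibCharPoly k φ = 0 := by
  have hcont : Continuous (fibCharPoly k : ℝ → ℝ) := by
    unfold fibCharPoly
    fun_prop
  have hk' : (2 : ℝ) ≤ k := by exact_mod_cast hk
  refine intermediate_value_Ioo one_le_two hcont.continuousOn ⟨?_, ?_⟩
  · rw [fibCharPoly_one]
    linarith
  · rw [fibCharPoly_two]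
    exact one_pos

theorem Complex.eq_norm_of_pow_succ_sub_two_mul_pow_add_one_eq_zero {k : ℕ} {z : ℂ}
    (hz : z ^ (k + 1) - 2 * z ^ k + 1 = 0) (hr : ‖z‖ ^ (k + 1) - 2 * ‖z‖ ^ k + 1 ≤ 0) :
    z = ‖z‖ := by
  set r := ‖z‖ with hr_def
  have hsum : ‖z ^ (k + 1) + 1‖ = 2 * r ^ k := by
    rw [show z ^ (k + 1) + 1 = 2 * z ^ k by linear_combination hz, norm_mul, norm_pow,
      Complex.norm_two]
  have htri := norm_add_le (z ^ (k + 1)) 1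
  rw [hsum, norm_pow, norm_one] at htri
  have hnorm : ‖z ^ (k + 1) + 1‖ = ‖z ^ (k + 1)‖ + ‖(1 : ℂ)‖ := by
    rw [hsum, norm_pow, norm_one]
    linarith
  have hrC : (r : ℂ) ^ (k + 1) - 2 * (r : ℂ) ^ k + 1 = 0 := by
    exact_mod_cast (by linarith : r ^ (k + 1) - 2 * r ^ k + 1 = 0)
  have hpow_succ : z ^ (k + 1) = (r : ℂ) ^ (k + 1) := by
    simpa [norm_pow, hr_def] using norm_add_eq_iff_real.mp hnorm
  have hpow : z ^ k = (r : ℂ) ^ k := by linear_combination (hpow_succ - hz + hrC) / 2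
  have hrk : (r : ℂ) ^ k ≠ 0 := by
    intro h0
    rw [pow_succ, h0] at hrC
    simp at hrC
  exact mul_right_cancel₀ hrk (by linear_combination hpow_succ - z * hpow)

theorem eq_norm_of_fibCharPoly_eq_zero {k : ℕ} {z : ℂ} (hz : fibCharPoly k z = 0)
    (hz1 : 1 ≤ ‖z‖) : z = ‖z‖ := by
  have hQz : z ^ (k + 1) - 2 * z ^ k + 1 = 0 := by
    rw [← sub_one_mul_fibCharPoly, hz, mul_zero]
  have hPr : fibCharPoly k ‖z‖ ≤ 0 := by
    have h : ‖z ^ k‖ ≤ ∑ j ∈ range k, ‖z ^ j‖ := by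
      rw [fibCharPoly, sub_eq_zero] at hz
      rw [hz]
      exact norm_sum_le _ _
    simp only [norm_pow] at h
    simp only [fibCharPoly]
    linarith
  have hQr_le : ‖z‖ ^ (k + 1) - 2 * ‖z‖ ^ k + 1 ≤ 0 := by
    rw [← sub_one_mul_fibCharPoly]
    exact mul_nonpos_of_nonneg_of_nonpos (by linarith) hPr
  exact Complex.eq_norm_of_pow_succ_sub_two_mul_pow_add_one_eq_zero hQz hQr_le

/-- The characteristic polynomial `P_k(x) = x^k - x^(k-1) - ⋯ - x - 1` of the
k-step Fibonacci sequence has exactly one real root `φ_k` greater than 1; this root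
satisfies `1 < φ_k < 2`, and every other complex root of `P_k` has modulus strictly
less than 1. In particular `φ_k` is the only root of `P_k` of modulus greater
than 1. -/
theorem k_step_fibonacci_constant (k : ℕ) (hk : 2 ≤ k) :
    ∃ φ : ℝ, 1 < φ ∧ φ < 2 ∧
      (φ ^ k - ∑ j ∈ Finset.range k, φ ^ j = 0) ∧
      (∀ x : ℝ, 1 < x → x ^ k - ∑ j ∈ Finset.range k, x ^ j = 0 → x = φ) ∧
      (∀ z : ℂ, z ^ k - ∑ j ∈ Finset.range k, z ^ j = 0 → z ≠ (φ : ℂ) →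
        ‖z‖ < 1) ∧
      (∀ z : ℂ, z ^ k - ∑ j ∈ Finset.range k, z ^ j = 0 → 1 < ‖z‖ →
        z = (φ : ℂ)) := by
  have hk0 : k ≠ 0 := by omega
  obtain ⟨φ, ⟨hφ1, hφ2⟩, hφ⟩ := exists_fibCharPoly_eq_zero hk
  have huniq (x : ℝ) (hx : 1 < x) (hPx : fibCharPoly k x = 0) : x = φ :=
    eq_of_fibCharPoly_eq_zero hk0 (by linarith) (by linarith) hPx hφ
  have hlarge (z : ℂ) (hz : fibCharPoly k z = 0) (hz1 : 1 ≤ ‖z‖) : z = φ := by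
    have hzr := eq_norm_of_fibCharPoly_eq_zero hz hz1
    have hPr : fibCharPoly k ‖z‖ = 0 := by
      rw [hzr, ← Complex.ofRealHom_eq_coe, ← map_fibCharPoly] at hz
      exact Complex.ofReal_eq_zero.mp hz
    have hr1 : 1 < ‖z‖ := by
      refine hz1.lt_of_ne fun h => ?_
      rw [← h, fibCharPoly_one] at hPr
      have : (2 : ℝ) ≤ k := by exact_mod_cast hk
      linarith
    rw [hzr, huniq _ hr1 hPr]
  refine ⟨φ, hφ1, hφ2, hφ, huniq, fun z hz hne => ?_, fun z hz hz1 => hlarge z hz hz1.le⟩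
  by_contra! hz1
  exact hne (hlarge z hz hz1)
end
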